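/- For every triangle singularity type T among the fourteen, and for every N ≥ 1, there exists a primitive embedding of the lattice P(T) into Λ_N. -/

import Mathlib

open scoped Classical

namespace Urabe

/-! ### Bilinear forms attached to Gram matrices -/

/-- The integral bilinear form attached to a Gram matrix. -/
def bilinZ {ι : Type*} [Fintype ι] (B : Matrix ι ι ℤ) (x y : ι → ℤ) : ℤ :=
  ∑ i, ∑ j, x i * B i j * y j

/-- The rational bilinear form attached to an integral Gram matrix. -/
def bilinQ {ι : Type*} [Fintype ι] (B : Matrix ι ι ℤ) (x y : ι → ℚ) : ℚ :=
  ∑ i, ∑ j, x i * (B i j : ℚ) * y j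

/-! ### Star graphs `T_{p,q,r}` and their lattices -/

/-- Adjacency for the star graph `T_{p,q,r}`: vertex `0` is the center, the three
arms consist of the vertices `1,…,p-1`, `p,…,p+q-2` and `p+q-1,…,p+q+r-3`. -/
def starAdj (p q r i j : ℕ) : Prop :=
  (i = 0 ∧ (j = 1 ∨ j = p ∨ j = p + q - 1)) ∨
  (j = 0 ∧ (i = 1 ∨ i = p ∨ i = p + q - 1)) ∨
  (j = i + 1 ∧ ((1 ≤ i ∧ j ≤ p - 1) ∨ (p ≤ i ∧ j ≤ p + q - 2) ∨
      (p + q - 1 ≤ i ∧ j ≤ p + q + r - 3))) ∨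
  (i = j + 1 ∧ ((1 ≤ j ∧ i ≤ p - 1) ∨ (p ≤ j ∧ i ≤ p + q - 2) ∨
      (p + q - 1 ≤ j ∧ i ≤ p + q + r - 3)))

/-- Gram matrix of the lattice `Q(T_{p,q,r})` of the star graph `T_{p,q,r}`:
`-2` on the diagonal, `1` for adjacent vertices, `0` otherwise. -/
noncomputable def starGram (p q r : ℕ) :
    Matrix (Fin (p + q + r - 2)) (Fin (p + q + r - 2)) ℤ :=
  Matrix.of fun i j =>
    if (i : ℕ) = (j : ℕ) then -2
    else if starAdj p q r (i : ℕ) (j : ℕ) then 1 else 0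

/-! ### The fourteen triangle singularities -/

inductive TriType
  | E12 | E13 | E14 | Z11 | Z12 | Z13 | Q10 | Q11 | Q12 | W12 | W13 | S11 | S12 | U12
deriving DecidableEq

/-- The Gabriélov triplet `(p₁, p₂, p₃)`. -/
def triplet : TriType → ℕ × ℕ × ℕ
  | .E12 => (2,3,7) | .E13 => (2,3,8) | .E14 => (2,3,9)
  | .Z11 => (2,4,5) | .Z12 => (2,4,6) | .Z13 => (2,4,7)
  | .Q10 => (3,3,4) | .Q11 => (3,3,5) | .Q12 => (3,3,6)
  | .W12 => (2,5,5) | .W13 => (2,5,6)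
  | .S11 => (3,4,4) | .S12 => (3,4,5)
  | .U12 => (4,4,4)

/-- The Milnor number `μ(T) = p₁ + p₂ + p₃`. -/
def mu (T : TriType) : ℕ := (triplet T).1 + (triplet T).2.1 + (triplet T).2.2

/-- Gram matrix of the Gabriélov lattice `Q(T_{p₁,p₂,p₃})` of type `T`. -/
noncomputable def gabGram (T : TriType) :
    Matrix (Fin (mu T - 2)) (Fin (mu T - 2)) ℤ :=
  starGram (triplet T).1 (triplet T).2.1 (triplet T).2.2

/-- The strange duality involution. -/
def dual : TriType → TriType
  | .E12 => .E12 | .Z12 => .Z12 | .Q12 => .Q12 | .W12 => .W12 | .S12 => .S12 | .U12 => .U12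
  | .E13 => .Z11 | .Z11 => .E13
  | .E14 => .Q10 | .Q10 => .E14
  | .Z13 => .Q11 | .Q11 => .Z13
  | .W13 => .S11 | .S11 => .W13

/-- Rank of the lattice `P(T) = Q(Γ*)`. -/
def Prank (T : TriType) : ℕ := mu (dual T) - 2

/-- Gram matrix of the lattice `P(T)`: the Gabriélov lattice of the dual type `T*`. -/
noncomputable def PGram (T : TriType) : Matrix (Fin (Prank T)) (Fin (Prank T)) ℤ :=
  gabGram (dual T)

/-! ### The even unimodular lattices `Λ_N = E8(-1) ⊕ E8(-1) ⊕ H^N` -/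

/-- Gram matrix of `E8(-1)`; its Dynkin graph is the star graph `T_{2,3,5}`. -/
noncomputable def E8Gram : Matrix (Fin 8) (Fin 8) ℤ := starGram 2 3 5

/-- Gram matrix of the hyperbolic plane `H`. -/
def HGram : Matrix (Fin 2) (Fin 2) ℤ := !![0, 1; 1, 0]

/-- Index type for `Λ_N = E8(-1) ⊕ E8(-1) ⊕ H^N`. -/
abbrev LambdaIx (N : ℕ) := (Fin 8 ⊕ Fin 8) ⊕ (Fin N × Fin 2)

/-- Gram matrix of `Λ_N = E8(-1) ⊕ E8(-1) ⊕ H^N`. -/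
noncomputable def LambdaGram (N : ℕ) : Matrix (LambdaIx N) (LambdaIx N) ℤ :=
  Matrix.of fun i j =>
    match i, j with
    | .inl (.inl a), .inl (.inl b) => E8Gram a b
    | .inl (.inr a), .inl (.inr b) => E8Gram a b
    | .inr (k, a), .inr (l, b) => if k = l then HGram a b else 0
    | _, _ => 0

/-! ### Embeddings, primitive hulls, orthogonal complements -/

/-- An embedding of lattices: an injective `ℤ`-linear map preserving the bilinear forms. -/
def IsEmbedding {ι κ : Type*} [Fintype ι] [Fintype κ]
    (A : Matrix ι ι ℤ) (B : Matrix κ κ ℤ) (f : (ι → ℤ) →ₗ[ℤ] (κ → ℤ)) : Prop :=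
  Function.Injective f ∧ ∀ x y, bilinZ B (f x) (f y) = bilinZ A x y

/-- The primitive hull `M̃ = {x ∈ L : m • x ∈ M for some nonzero scalar m}`. -/
def primHull {R L : Type*} [CommRing R] [IsDomain R] [AddCommGroup L] [Module R L]
    (M : Submodule R L) : Submodule R L where
  carrier := {x | ∃ m : R, m ≠ 0 ∧ m • x ∈ M}
  zero_mem' := ⟨1, one_ne_zero, by simp⟩
  add_mem' := by
    rintro x y ⟨m, hm, hmx⟩ ⟨n, hn, hny⟩
    refine ⟨m * n, mul_ne_zero hm hn, ?_⟩
    have h : (m * n) • (x + y) = n • (m • x) + m • (n • y) := by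
      rw [smul_add, smul_smul, smul_smul, mul_comm n m]
    rw [h]
    exact M.add_mem (M.smul_mem n hmx) (M.smul_mem m hny)
  smul_mem' := by
    rintro c x ⟨m, hm, hmx⟩
    refine ⟨m, hm, ?_⟩
    rw [smul_smul, mul_comm, ← smul_smul]
    exact M.smul_mem c hmx

/-- A submodule is primitive if it coincides with its primitive hull. -/
def IsPrimitive {R L : Type*} [CommRing R] [IsDomain R] [AddCommGroup L] [Module R L]
    (M : Submodule R L) : Prop :=
  primHull M = M

lemma bilinZ_add_left {ι : Type*} [Fintype ι] (B : Matrix ι ι ℤ) (x y z : ι → ℤ) :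
    bilinZ B (x + y) z = bilinZ B x z + bilinZ B y z := by
  simp [bilinZ, add_mul, Finset.sum_add_distrib]

lemma bilinZ_smul_left {ι : Type*} [Fintype ι] (B : Matrix ι ι ℤ) (c : ℤ) (x y : ι → ℤ) :
    bilinZ B (c • x) y = c * bilinZ B x y := by
  simp [bilinZ, Finset.mul_sum, mul_assoc]

/-- The orthogonal complement of a submodule inside the lattice with Gram matrix `B`. -/
def orthComp {ι : Type*} [Fintype ι] (B : Matrix ι ι ℤ) (M : Submodule ℤ (ι → ℤ)) :
    Submodule ℤ (ι → ℤ) where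
  carrier := {x | ∀ m ∈ M, bilinZ B x m = 0}
  zero_mem' := by
    intro m hm
    have : (0 : ι → ℤ) = (0 : ℤ) • (0 : ι → ℤ) := by simp
    rw [this, bilinZ_smul_left]; ring
  add_mem' := by
    intro x y hx hy m hm
    rw [bilinZ_add_left, hx m hm, hy m hm]; ring
  smul_mem' := by
    intro c x hx m hm
    rw [bilinZ_smul_left, hx m hm]; ring

/-! ### The induced rational form on the quotient `Λ/M̃` -/

/-- Coefficientwise embedding `ℤ^ι → ℚ^ι`. -/
def toQ {ι : Type*} (x : ι → ℤ) : ι → ℚ := fun i => (x i : ℚ)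

/-- The `ℚ`-span of a `ℤ`-submodule inside `ℚ^ι`. -/
def spanQ {ι : Type*} (M : Submodule ℤ (ι → ℤ)) : Submodule ℚ (ι → ℚ) :=
  Submodule.span ℚ (toQ '' (M : Set (ι → ℤ)))

/-- The orthogonal projection (with respect to `B`) of a vector onto the `ℚ`-span of `M`,
whenever it exists (and is unique, e.g. when `M` is nondegenerate). -/
noncomputable def projPart {ι : Type*} [Fintype ι] (B : Matrix ι ι ℤ)
    (M : Submodule ℤ (ι → ℤ)) (x : ι → ℚ) : ι → ℚ :=
  if h : ∃ p ∈ spanQ M, ∀ q ∈ spanQ M, bilinQ B (x - p) q = 0 then h.choose else 0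

/-- The canonically induced `ℚ`-valued bilinear form on the quotient `Λ/M̃`,
defined via orthogonal projection onto the orthogonal complement of `M` in `Λ ⊗ ℚ`. -/
noncomputable def inducedForm {ι : Type*} [Fintype ι] (B : Matrix ι ι ℤ)
    (M : Submodule ℤ (ι → ℤ)) (x y : (ι → ℤ) ⧸ primHull M) : ℚ :=
  bilinQ B (toQ x.out - projPart B M (toQ x.out))
           (toQ y.out - projPart B M (toQ y.out))

/-- `F_N`: the image of the orthogonal complement of `M` under the quotient map `Λ → Λ/M̃`. -/
noncomputable def FNsub {ι : Type*} [Fintype ι] (B : Matrix ι ι ℤ)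
    (M : Submodule ℤ (ι → ℤ)) : Submodule ℤ ((ι → ℤ) ⧸ primHull M) :=
  (orthComp B M).map (primHull M).mkQ

/-! ### Root modules and full embeddings -/

/-- A root of the pair `(L, FL)`. -/
def IsRoot {L : Type*} [AddCommGroup L] [Module ℤ L]
    (b : L → L → ℚ) (FL : Submodule ℤ L) (a : L) : Prop :=
  (a ∈ FL ∧ b a a = -2) ∨ b a a = -1 ∨ b a a = -2/3 ∨ (b a a = -1/2 ∧ (2 : ℤ) • a ∈ FL)

/-- The pair `(L, FL)` is a root module: (R1) `2(x,α)/α²` is an integer for all `x` and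
all roots `α`, and (R2) each reflection `s_α(x) = x - (2(x,α)/α²)α` preserves `FL`. -/
def IsRootModule {L : Type*} [AddCommGroup L] [Module ℤ L]
    (b : L → L → ℚ) (FL : Submodule ℤ L) : Prop :=
  (∀ x a : L, IsRoot b FL a → ∃ k : ℤ, 2 * b x a = (k : ℚ) * b a a) ∧
  (∀ a : L, IsRoot b FL a → ∀ x ∈ FL, ∀ k : ℤ,
      2 * b x a = (k : ℚ) * b a a → x - k • a ∈ FL)

/-- A full embedding of the lattice with Gram matrix `A` into the root module `(L, FL)`:
an injective form-preserving `ℤ`-linear map whose image is full, i.e. every root of the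
primitive hull of the image already lies in the image. -/
def IsFullEmbedding {κ : Type*} [Fintype κ] {L : Type*} [AddCommGroup L] [Module ℤ L]
    (A : Matrix κ κ ℤ) (b : L → L → ℚ) (FL : Submodule ℤ L)
    (g : (κ → ℤ) →ₗ[ℤ] L) : Prop :=
  Function.Injective g ∧ (∀ x y, b (g x) (g y) = (bilinZ A x y : ℚ)) ∧
  (∀ a ∈ primHull (LinearMap.range g), IsRoot b FL a → a ∈ LinearMap.range g)

/-! ### Dynkin graphs with components of type A, D, E -/

/-- A connected Dynkin graph of type `A`, `D` or `E`. -/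
inductive ADE
  | A : ℕ → ADE
  | D : ℕ → ADE
  | E : ℕ → ADE
deriving DecidableEq

/-- Each connected ADE graph is a star graph: `A_k = T_{1,1,k}`, `D_ℓ = T_{2,2,ℓ-2}`,
`E_m = T_{2,3,m-3}`. -/
def ADE.triple : ADE → ℕ × ℕ × ℕ
  | .A k => (1, 1, k)
  | .D l => (2, 2, l - 2)
  | .E m => (2, 3, m - 3)

/-- The valid ADE types: `A_k (k ≥ 1)`, `D_ℓ (ℓ ≥ 4)`, `E_6, E_7, E_8`. -/
def ADE.valid : ADE → Prop
  | .A k => 1 ≤ k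
  | .D l => 4 ≤ l
  | .E m => m = 6 ∨ m = 7 ∨ m = 8

/-- Number of vertices of a connected ADE graph. -/
def ADE.rank (c : ADE) : ℕ := c.triple.1 + c.triple.2.1 + c.triple.2.2 - 2

/-- Gram matrix of the root lattice of a connected ADE graph. -/
noncomputable def ADE.gram (c : ADE) : Matrix (Fin c.rank) (Fin c.rank) ℤ :=
  starGram c.triple.1 c.triple.2.1 c.triple.2.2

/-- Vertex set of a Dynkin graph given as a list of connected ADE components. -/
abbrev graphIx (G : List ADE) := (i : Fin G.length) × Fin (G.get i).rank

/-- Gram matrix of the root lattice `Q(G)` of a Dynkin graph `G` (block diagonal sum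
of the Gram matrices of the components). -/
noncomputable def graphGram (G : List ADE) : Matrix (graphIx G) (graphIx G) ℤ :=
  Matrix.of fun a b =>
    if h : a.1 = b.1 then (G.get a.1).gram a.2 (Fin.cast (by rw [h]) b.2) else 0

/-- There is a full embedding of `Q(G)` into the root module `(Λ/M̃, F)` attached to the
submodule `M` of the lattice with Gram matrix `B`. -/
noncomputable def HasFullEmb (G : List ADE) {ι : Type*} [Fintype ι]
    (B : Matrix ι ι ℤ) (M : Submodule ℤ (ι → ℤ)) : Prop :=
  ∃ g : (graphIx G → ℤ) →ₗ[ℤ] ((ι → ℤ) ⧸ primHull M),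
    IsFullEmbedding (graphGram G) (inducedForm B M) (FNsub B M) g



/-! ### Auxiliary machinery for the proof -/

open Matrix


open Matrix

instance instDecStarAdj (p q r i j : ℕ) : Decidable (starAdj p q r i j) := by
  unfold starAdj; infer_instance

def starGramC (p q r : ℕ) :
    Matrix (Fin (p + q + r - 2)) (Fin (p + q + r - 2)) ℤ :=
  Matrix.of fun i j =>
    if (i : ℕ) = (j : ℕ) then -2
    else if starAdj p q r (i : ℕ) (j : ℕ) then 1 else 0

lemma starGram_eq (p q r : ℕ) : starGram p q r = starGramC p q r := by
  ext i j
  simp only [starGram, starGramC, Matrix.of_apply]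
  split_ifs <;> rfl

abbrev Ix18 := (Fin 8 ⊕ Fin 8) ⊕ Fin 2

def E8GramC : Matrix (Fin 8) (Fin 8) ℤ := starGramC 2 3 5

lemma E8Gram_eq : E8Gram = E8GramC := starGram_eq 2 3 5

def B18 : Matrix Ix18 Ix18 ℤ :=
  Matrix.of fun i j =>
    match i, j with
    | .inl (.inl a), .inl (.inl b) => E8GramC a b
    | .inl (.inr a), .inl (.inr b) => E8GramC a b
    | .inr a, .inr b => HGram a b
    | _, _ => 0

lemma bilinZ_eq_dot {ι : Type*} [Fintype ι] (B : Matrix ι ι ℤ) (x y : ι → ℤ) :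
    bilinZ B x y = x ⬝ᵥ (B *ᵥ y) := by
  simp [bilinZ, dotProduct, Matrix.mulVec, Finset.mul_sum, mul_assoc]

lemma bilinZ_mulVec {ι κ : Type*} [Fintype ι] [Fintype κ] (B : Matrix ι ι ℤ)
    (F : Matrix ι κ ℤ) (x y : κ → ℤ) :
    bilinZ B (F *ᵥ x) (F *ᵥ y) = bilinZ (Fᵀ * B * F) x y := by
  rw [bilinZ_eq_dot, bilinZ_eq_dot, Matrix.mulVec_mulVec, Matrix.dotProduct_mulVec,
    ← Matrix.vecMul_transpose, Matrix.vecMul_vecMul, ← Matrix.dotProduct_mulVec,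
    ← Matrix.mul_assoc]



def extFun (N : ℕ) (x : Ix18 → ℤ) : LambdaIx N → ℤ := fun u =>
  match u with
  | .inl s => x (.inl s)
  | .inr (k, a) => if (k : ℕ) = 0 then x (.inr a) else 0

def extLin (N : ℕ) : (Ix18 → ℤ) →ₗ[ℤ] (LambdaIx N → ℤ) where
  toFun := extFun N
  map_add' x y := by
    funext u; rcases u with s | ⟨k, a⟩
    · rfl
    · by_cases h : (k : ℕ) = 0 <;> simp [extFun, h]
  map_smul' c x := by
    funext u; rcases u with s | ⟨k, a⟩
    · rfl
    · by_cases h : (k : ℕ) = 0 <;> simp [extFun, h]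

def ι18 (N : ℕ) (hN : 1 ≤ N) : Ix18 → LambdaIx N := fun v =>
  match v with
  | .inl s => .inl s
  | .inr a => .inr (⟨0, hN⟩, a)

lemma extFun_ι (N : ℕ) (hN : 1 ≤ N) (x : Ix18 → ℤ) (v : Ix18) :
    extFun N x (ι18 N hN v) = x v := by
  rcases v with s | a <;> simp [extFun, ι18]

lemma sum_reduce (N : ℕ) (hN : 1 ≤ N) (φ : LambdaIx N → ℤ)
    (h0 : ∀ (k : Fin N) (a : Fin 2), (k : ℕ) ≠ 0 → φ (.inr (k, a)) = 0) :
    ∑ u, φ u = ∑ v, φ (ι18 N hN v) := by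
  have key : ∑ k : Fin N, ∑ a : Fin 2, φ (.inr (k, a)) = ∑ a : Fin 2, φ (.inr (⟨0, hN⟩, a)) := by
    rw [Finset.sum_eq_single (⟨0, hN⟩ : Fin N)]
    · intro b _ hb
      have hb' : (b : ℕ) ≠ 0 := fun h => hb (Fin.ext h)
      simp [h0 b _ hb']
    · intro h; exact absurd (Finset.mem_univ _) h
  calc ∑ u, φ u
      = (∑ s : Fin 8 ⊕ Fin 8, φ (.inl s)) + ∑ k : Fin N, ∑ a : Fin 2, φ (.inr (k, a)) := by
        rw [Fintype.sum_sum_type, Fintype.sum_prod_type]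
    _ = (∑ s : Fin 8 ⊕ Fin 8, φ (.inl s)) + ∑ a : Fin 2, φ (.inr (⟨0, hN⟩, a)) := by rw [key]
    _ = ∑ v, φ (ι18 N hN v) := by rw [Fintype.sum_sum_type (f := fun v => φ (ι18 N hN v))]; rfl

lemma lambda_ι (N : ℕ) (hN : 1 ≤ N) (v w : Ix18) :
    LambdaGram N (ι18 N hN v) (ι18 N hN w) = B18 v w := by
  rcases v with (a | a) | a <;> rcases w with (b | b) | b <;>
    simp [LambdaGram, B18, ι18, E8Gram_eq]

lemma bilin_ext (N : ℕ) (hN : 1 ≤ N) (x y : Ix18 → ℤ) :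
    bilinZ (LambdaGram N) (extFun N x) (extFun N y) = bilinZ B18 x y := by
  unfold bilinZ
  rw [sum_reduce N hN]
  · refine Finset.sum_congr rfl fun v _ => ?_
    rw [sum_reduce N hN]
    · refine Finset.sum_congr rfl fun w _ => ?_
      rw [extFun_ι, extFun_ι, lambda_ι]
    · intro k a hk; simp [extFun, hk]
  · intro k a hk; simp [extFun, hk]

def restrLin (N : ℕ) (hN : 1 ≤ N) : (LambdaIx N → ℤ) →ₗ[ℤ] (Ix18 → ℤ) :=
  LinearMap.funLeft ℤ ℤ (ι18 N hN)

lemma restr_ext (N : ℕ) (hN : 1 ≤ N) (x : Ix18 → ℤ) :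
    restrLin N hN (extLin N x) = x := by
  funext v; exact extFun_ι N hN x v

lemma leftInv_good {n : ℕ} {κ : Type*} [Fintype κ]
    (f : (Fin n → ℤ) →ₗ[ℤ] (κ → ℤ)) (g : (κ → ℤ) →ₗ[ℤ] (Fin n → ℤ))
    (h : ∀ x, g (f x) = x) :
    Function.Injective f ∧ IsPrimitive (LinearMap.range f) := by
  constructor
  · intro a b hab
    rw [← h a, ← h b, hab]
  · apply Submodule.ext
    intro x
    constructor
    · rintro ⟨m, hm, y, hy⟩
      have hy' : y = m • g x := by
        rw [← h y, hy]; exact g.map_smul m x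
      have h2 : m • f (g x) = m • x := by
        rw [← f.map_smul, ← hy', hy]
      have h3 : f (g x) = x := by
        funext i
        have := congrFun h2 i
        simp only [Pi.smul_apply, smul_eq_mul] at this
        exact mul_left_cancel₀ hm this
      exact ⟨g x, h3⟩
    · intro hx
      exact ⟨1, one_ne_zero, by simpa using hx⟩

theorem master {n : ℕ} (A : Matrix (Fin n) (Fin n) ℤ)
    (F : Matrix Ix18 (Fin n) ℤ) (G : Matrix (Fin n) Ix18 ℤ)
    (h1 : Fᵀ * B18 * F = A) (h2 : G * F = 1)
    (N : ℕ) (hN : 1 ≤ N) :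
    ∃ f : (Fin n → ℤ) →ₗ[ℤ] (LambdaIx N → ℤ),
      IsEmbedding A (LambdaGram N) f ∧ IsPrimitive (LinearMap.range f) := by
  refine ⟨(extLin N).comp F.mulVecLin, ?_⟩
  have hleft : ∀ x, ((G.mulVecLin).comp (restrLin N hN)) (((extLin N).comp F.mulVecLin) x) = x := by
    intro x
    simp only [LinearMap.comp_apply, Matrix.mulVecLin_apply, restr_ext]
    rw [Matrix.mulVec_mulVec, h2, Matrix.one_mulVec]
  obtain ⟨hinj, hprim⟩ := leftInv_good _ _ hleft
  exact ⟨⟨hinj, fun x y => by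
    simpa only [LinearMap.comp_apply, Matrix.mulVecLin_apply, extLin, LinearMap.coe_mk, AddHom.coe_mk] using
      (by rw [bilin_ext N hN, bilinZ_mulVec, h1] :
        bilinZ (LambdaGram N) (extFun N (F *ᵥ x)) (extFun N (F *ᵥ y)) = bilinZ A x y)⟩, hprim⟩

def idx18 : Ix18 → ℕ
  | .inl (.inl a) => (a : ℕ)
  | .inl (.inr a) => 8 + (a : ℕ)
  | .inr a => 16 + (a : ℕ)

def mkF (L : List (List ℤ)) (n : ℕ) : Matrix Ix18 (Fin n) ℤ :=
  Matrix.of fun i j => (L.getD (idx18 i) []).getD (j : ℕ) 0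

def mkG (L : List (List ℤ)) (n : ℕ) : Matrix (Fin n) Ix18 ℤ :=
  Matrix.of fun i j => (L.getD (i : ℕ) []).getD (idx18 j) 0

def Fd_E12 : List (List ℤ) := [[7, 0, 0, 0, 0, 0, 0, 0, 0, 0],
  [3, 1, 0, 0, 0, 0, 0, 0, 0, 0],
  [4, 0, 1, 0, 0, 0, 0, 0, 0, 0],
  [2, 0, 0, 1, 0, 0, 0, 0, 0, 0],
  [5, 0, 0, 0, 0, 0, 0, 0, 0, 0],
  [2, 0, 0, 0, 0, 0, 0, 0, 0, 0],
  [1, 0, 0, 0, 0, 0, 0, 0, 0, 0],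
  [0, 0, 0, 0, 0, 0, 0, 0, 0, 0],
  [0, 0, 0, 0, 0, 1, 0, 0, 0, 0],
  [0, 0, 0, 0, 1, 0, 0, 0, 0, 0],
  [0, 0, 0, 0, 0, 0, 0, 0, 0, 0],
  [0, 0, 0, 0, 0, 0, 0, 0, 0, 0],
  [0, 0, 0, 0, 0, 0, 1, 0, 0, 0],
  [0, 0, 0, 0, 0, 0, 0, 1, 0, 0],
  [0, 0, 0, 0, 0, 0, 0, 0, 1, 0],
  [0, 0, 0, 0, 0, 0, 0, 0, 0, 1],
  [1, 0, 0, 0, 0, 0, 0, 0, 0, 0],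
  [3, 0, 0, 0, 1, 0, 0, 0, 0, 0]]

def Gd_E12 : List (List ℤ) := [[0, 0, 0, 0, 0, 0, 1, 0, 0, 0, 0, 0, 0, 0, 0, 0, 0, 0],
  [0, 1, 0, 0, 0, 0, -3, 0, 0, 0, 0, 0, 0, 0, 0, 0, 0, 0],
  [0, 0, 1, 0, 0, 0, -4, 0, 0, 0, 0, 0, 0, 0, 0, 0, 0, 0],
  [0, 0, 0, 1, 0, 0, -2, 0, 0, 0, 0, 0, 0, 0, 0, 0, 0, 0],
  [0, 0, 0, 0, 0, 0, 0, 0, 0, 1, 0, 0, 0, 0, 0, 0, 0, 0],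
  [0, 0, 0, 0, 0, 0, 0, 0, 1, 0, 0, 0, 0, 0, 0, 0, 0, 0],
  [0, 0, 0, 0, 0, 0, 0, 0, 0, 0, 0, 0, 1, 0, 0, 0, 0, 0],
  [0, 0, 0, 0, 0, 0, 0, 0, 0, 0, 0, 0, 0, 1, 0, 0, 0, 0],
  [0, 0, 0, 0, 0, 0, 0, 0, 0, 0, 0, 0, 0, 0, 1, 0, 0, 0],
  [0, 0, 0, 0, 0, 0, 0, 0, 0, 0, 0, 0, 0, 0, 0, 1, 0, 0]]

def Fd_E13 : List (List ℤ) := [[7, 0, 0, 0, 0, 0, 0, 0, 0, 0, 0],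
  [3, 1, 0, 0, 0, 0, 0, 0, 0, 0, 0],
  [4, 0, 1, 0, 0, 0, 0, 0, 0, 0, 0],
  [2, 0, 0, 1, 0, 0, 0, 0, 0, 0, 0],
  [5, 0, 0, 0, 0, 0, 0, 0, 0, 0, 0],
  [2, 0, 0, 0, 0, 0, 0, 0, 0, 0, 0],
  [1, 0, 0, 0, 0, 0, 0, 0, 0, 0, 0],
  [0, 0, 0, 0, 0, 0, 0, 0, 0, 0, 0],
  [0, 0, 0, 0, 5, 0, 1, 0, 0, 0, 0],
  [0, 0, 0, 0, 3, 0, 0, 0, 0, 0, 0],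
  [0, 0, 0, 0, 3, 1, 0, 0, 0, 0, 0],
  [0, 0, 0, 0, 2, 0, 0, 0, 0, 0, 0],
  [0, 0, 0, 0, 4, 0, 0, 1, 0, 0, 0],
  [0, 0, 0, 0, 3, 0, 0, 0, 1, 0, 0],
  [0, 0, 0, 0, 2, 0, 0, 0, 0, 1, 0],
  [0, 0, 0, 0, 1, 0, 0, 0, 0, 0, 1],
  [1, 0, 0, 0, 0, 0, 0, 0, 0, 0, 0],
  [3, 0, 0, 0, 1, 0, 0, 0, 0, 0, 0]]

def Gd_E13 : List (List ℤ) := [[0, 0, 0, 0, 0, 0, 1, 0, 0, 0, 0, 0, 0, 0, 0, 0, 0, 0],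
  [0, 1, 0, 0, 0, 0, -3, 0, 0, 0, 0, 0, 0, 0, 0, 0, 0, 0],
  [0, 0, 1, 0, 0, 0, -4, 0, 0, 0, 0, 0, 0, 0, 0, 0, 0, 0],
  [0, 0, 0, 1, 0, 0, -2, 0, 0, 0, 0, 0, 0, 0, 0, 0, 0, 0],
  [0, 0, 0, 0, 0, 0, -3, 0, 0, 0, 0, 0, 0, 0, 0, 0, 0, 1],
  [0, 0, 0, 0, 0, 0, 9, 0, 0, 0, 1, 0, 0, 0, 0, 0, 0, -3],
  [0, 0, 0, 0, 0, 0, 15, 0, 1, 0, 0, 0, 0, 0, 0, 0, 0, -5],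
  [0, 0, 0, 0, 0, 0, 12, 0, 0, 0, 0, 0, 1, 0, 0, 0, 0, -4],
  [0, 0, 0, 0, 0, 0, 9, 0, 0, 0, 0, 0, 0, 1, 0, 0, 0, -3],
  [0, 0, 0, 0, 0, 0, 6, 0, 0, 0, 0, 0, 0, 0, 1, 0, 0, -2],
  [0, 0, 0, 0, 0, 0, 3, 0, 0, 0, 0, 0, 0, 0, 0, 1, 0, -1]]

def Fd_E14 : List (List ℤ) := [[7, 0, 0, 0, 0, 0, 0, 0, 0, 0, 0, 0],
  [3, 1, 0, 0, 0, 0, 0, 0, 0, 0, 0, 0],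
  [4, 0, 1, 0, 0, 0, 0, 0, 0, 0, 0, 0],
  [2, 0, 0, 1, 0, 0, 0, 0, 0, 0, 0, 0],
  [5, 0, 0, 0, 0, 0, 0, 0, 0, 0, 0, 0],
  [2, 0, 0, 0, 0, 0, 0, 0, 0, 0, 0, 0],
  [1, 0, 0, 0, 0, 0, 0, 0, 0, 0, 0, 0],
  [0, 0, 0, 0, 0, 0, 0, 0, 0, 0, 0, 0],
  [0, 0, 0, 0, 5, 0, 0, 1, 0, 0, 0, 0],
  [0, 0, 0, 0, 3, 0, 0, 0, 0, 0, 0, 0],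
  [0, 0, 0, 0, 3, 0, 1, 0, 0, 0, 0, 0],
  [0, 0, 0, 0, 1, 1, 0, 0, 0, 0, 0, 0],
  [0, 0, 0, 0, 4, 0, 0, 0, 1, 0, 0, 0],
  [0, 0, 0, 0, 3, 0, 0, 0, 0, 1, 0, 0],
  [0, 0, 0, 0, 2, 0, 0, 0, 0, 0, 1, 0],
  [0, 0, 0, 0, 1, 0, 0, 0, 0, 0, 0, 1],
  [1, 0, 0, 0, 0, 0, 0, 0, 0, 0, 0, 0],
  [3, 0, 0, 0, 1, 0, 0, 0, 0, 0, 0, 0]]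

def Gd_E14 : List (List ℤ) := [[0, 0, 0, 0, 0, 0, 1, 0, 0, 0, 0, 0, 0, 0, 0, 0, 0, 0],
  [0, 1, 0, 0, 0, 0, -3, 0, 0, 0, 0, 0, 0, 0, 0, 0, 0, 0],
  [0, 0, 1, 0, 0, 0, -4, 0, 0, 0, 0, 0, 0, 0, 0, 0, 0, 0],
  [0, 0, 0, 1, 0, 0, -2, 0, 0, 0, 0, 0, 0, 0, 0, 0, 0, 0],
  [0, 0, 0, 0, 0, 0, -3, 0, 0, 0, 0, 0, 0, 0, 0, 0, 0, 1],
  [0, 0, 0, 0, 0, 0, 3, 0, 0, 0, 0, 1, 0, 0, 0, 0, 0, -1],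
  [0, 0, 0, 0, 0, 0, 9, 0, 0, 0, 1, 0, 0, 0, 0, 0, 0, -3],
  [0, 0, 0, 0, 0, 0, 15, 0, 1, 0, 0, 0, 0, 0, 0, 0, 0, -5],
  [0, 0, 0, 0, 0, 0, 12, 0, 0, 0, 0, 0, 1, 0, 0, 0, 0, -4],
  [0, 0, 0, 0, 0, 0, 9, 0, 0, 0, 0, 0, 0, 1, 0, 0, 0, -3],
  [0, 0, 0, 0, 0, 0, 6, 0, 0, 0, 0, 0, 0, 0, 1, 0, 0, -2],
  [0, 0, 0, 0, 0, 0, 3, 0, 0, 0, 0, 0, 0, 0, 0, 1, 0, -1]]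

def Fd_Z11 : List (List ℤ) := [[9, 0, 0, 0, 0, 0, 0, 0, 0],
  [4, 1, 0, 0, 0, 0, 0, 0, 0],
  [6, 0, 0, 0, 0, 0, 0, 0, 0],
  [3, 0, 0, 0, 0, 0, 0, 0, 0],
  [6, 0, 1, 0, 0, 0, 0, 0, 0],
  [4, 0, 0, 1, 0, 0, 0, 0, 0],
  [2, 0, 0, 0, 1, 0, 0, 0, 0],
  [0, 0, 0, 0, 0, 0, 0, 0, 0],
  [0, 0, 0, 0, 0, 2, 0, 0, 0],
  [0, 0, 0, 0, 0, 1, 0, 0, 0],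
  [0, 0, 0, 0, 0, 1, 0, 0, 0],
  [0, 0, 0, 0, 0, 0, 0, 0, 0],
  [0, 0, 0, 0, 0, 1, 0, 0, 0],
  [0, 0, 0, 0, 0, 0, 1, 0, 0],
  [0, 0, 0, 0, 0, 0, 0, 1, 0],
  [0, 0, 0, 0, 0, 0, 0, 0, 1],
  [1, 0, 0, 0, 0, 0, 0, 0, 0],
  [3, 0, 0, 0, 0, 1, 0, 0, 0]]

def Gd_Z11 : List (List ℤ) := [[0, 0, 0, 0, 0, 0, 0, 0, 0, 0, 0, 0, 0, 0, 0, 0, 1, 0],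
  [0, 1, 0, 0, 0, 0, 0, 0, 0, 0, 0, 0, 0, 0, 0, 0, -4, 0],
  [0, 0, 0, 0, 1, 0, 0, 0, 0, 0, 0, 0, 0, 0, 0, 0, -6, 0],
  [0, 0, 0, 0, 0, 1, 0, 0, 0, 0, 0, 0, 0, 0, 0, 0, -4, 0],
  [0, 0, 0, 0, 0, 0, 1, 0, 0, 0, 0, 0, 0, 0, 0, 0, -2, 0],
  [0, 0, 0, 0, 0, 0, 0, 0, 0, 1, 0, 0, 0, 0, 0, 0, 0, 0],
  [0, 0, 0, 0, 0, 0, 0, 0, 0, 0, 0, 0, 0, 1, 0, 0, 0, 0],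
  [0, 0, 0, 0, 0, 0, 0, 0, 0, 0, 0, 0, 0, 0, 1, 0, 0, 0],
  [0, 0, 0, 0, 0, 0, 0, 0, 0, 0, 0, 0, 0, 0, 0, 1, 0, 0]]

def Fd_Z12 : List (List ℤ) := [[9, 0, 0, 0, 0, 0, 0, 0, 0, 0],
  [4, 1, 0, 0, 0, 0, 0, 0, 0, 0],
  [6, 0, 0, 0, 0, 0, 0, 0, 0, 0],
  [3, 0, 0, 0, 0, 0, 0, 0, 0, 0],
  [6, 0, 1, 0, 0, 0, 0, 0, 0, 0],
  [4, 0, 0, 1, 0, 0, 0, 0, 0, 0],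
  [2, 0, 0, 0, 1, 0, 0, 0, 0, 0],
  [0, 0, 0, 0, 0, 0, 0, 0, 0, 0],
  [0, 0, 0, 0, 0, 1, 0, 0, 0, 0],
  [0, 0, 0, 0, 0, 0, 0, 0, 0, 0],
  [0, 0, 0, 0, 0, 0, 0, 0, 0, 0],
  [0, 0, 0, 0, 0, 0, 0, 0, 0, 0],
  [0, 0, 0, 0, 0, 0, 1, 0, 0, 0],
  [0, 0, 0, 0, 0, 0, 0, 1, 0, 0],
  [0, 0, 0, 0, 0, 0, 0, 0, 1, 0],
  [0, 0, 0, 0, 0, 0, 0, 0, 0, 1],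
  [1, 0, 0, 0, 0, 0, 0, 0, 0, 0],
  [3, 0, 0, 0, 0, 1, 0, 0, 0, 0]]

def Gd_Z12 : List (List ℤ) := [[0, 0, 0, 0, 0, 0, 0, 0, 0, 0, 0, 0, 0, 0, 0, 0, 1, 0],
  [0, 1, 0, 0, 0, 0, 0, 0, 0, 0, 0, 0, 0, 0, 0, 0, -4, 0],
  [0, 0, 0, 0, 1, 0, 0, 0, 0, 0, 0, 0, 0, 0, 0, 0, -6, 0],
  [0, 0, 0, 0, 0, 1, 0, 0, 0, 0, 0, 0, 0, 0, 0, 0, -4, 0],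
  [0, 0, 0, 0, 0, 0, 1, 0, 0, 0, 0, 0, 0, 0, 0, 0, -2, 0],
  [0, 0, 0, 0, 0, 0, 0, 0, 1, 0, 0, 0, 0, 0, 0, 0, 0, 0],
  [0, 0, 0, 0, 0, 0, 0, 0, 0, 0, 0, 0, 1, 0, 0, 0, 0, 0],
  [0, 0, 0, 0, 0, 0, 0, 0, 0, 0, 0, 0, 0, 1, 0, 0, 0, 0],
  [0, 0, 0, 0, 0, 0, 0, 0, 0, 0, 0, 0, 0, 0, 1, 0, 0, 0],
  [0, 0, 0, 0, 0, 0, 0, 0, 0, 0, 0, 0, 0, 0, 0, 1, 0, 0]]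

def Fd_Z13 : List (List ℤ) := [[9, 0, 0, 0, 0, 0, 0, 0, 0, 0, 0],
  [4, 1, 0, 0, 0, 0, 0, 0, 0, 0, 0],
  [6, 0, 0, 0, 0, 0, 0, 0, 0, 0, 0],
  [3, 0, 0, 0, 0, 0, 0, 0, 0, 0, 0],
  [6, 0, 1, 0, 0, 0, 0, 0, 0, 0, 0],
  [4, 0, 0, 1, 0, 0, 0, 0, 0, 0, 0],
  [2, 0, 0, 0, 1, 0, 0, 0, 0, 0, 0],
  [0, 0, 0, 0, 0, 0, 0, 0, 0, 0, 0],
  [0, 0, 0, 0, 0, 0, 1, 0, 0, 0, 0],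
  [0, 0, 0, 0, 0, 1, 0, 0, 0, 0, 0],
  [0, 0, 0, 0, 0, 0, 0, 0, 0, 0, 0],
  [0, 0, 0, 0, 0, 0, 0, 0, 0, 0, 0],
  [0, 0, 0, 0, 0, 0, 0, 1, 0, 0, 0],
  [0, 0, 0, 0, 0, 0, 0, 0, 1, 0, 0],
  [0, 0, 0, 0, 0, 0, 0, 0, 0, 1, 0],
  [0, 0, 0, 0, 0, 0, 0, 0, 0, 0, 1],
  [1, 0, 0, 0, 0, 0, 0, 0, 0, 0, 0],
  [3, 0, 0, 0, 0, 1, 0, 0, 0, 0, 0]]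

def Gd_Z13 : List (List ℤ) := [[0, 0, 0, 0, 0, 0, 0, 0, 0, 0, 0, 0, 0, 0, 0, 0, 1, 0],
  [0, 1, 0, 0, 0, 0, 0, 0, 0, 0, 0, 0, 0, 0, 0, 0, -4, 0],
  [0, 0, 0, 0, 1, 0, 0, 0, 0, 0, 0, 0, 0, 0, 0, 0, -6, 0],
  [0, 0, 0, 0, 0, 1, 0, 0, 0, 0, 0, 0, 0, 0, 0, 0, -4, 0],
  [0, 0, 0, 0, 0, 0, 1, 0, 0, 0, 0, 0, 0, 0, 0, 0, -2, 0],
  [0, 0, 0, 0, 0, 0, 0, 0, 0, 1, 0, 0, 0, 0, 0, 0, 0, 0],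
  [0, 0, 0, 0, 0, 0, 0, 0, 1, 0, 0, 0, 0, 0, 0, 0, 0, 0],
  [0, 0, 0, 0, 0, 0, 0, 0, 0, 0, 0, 0, 1, 0, 0, 0, 0, 0],
  [0, 0, 0, 0, 0, 0, 0, 0, 0, 0, 0, 0, 0, 1, 0, 0, 0, 0],
  [0, 0, 0, 0, 0, 0, 0, 0, 0, 0, 0, 0, 0, 0, 1, 0, 0, 0],
  [0, 0, 0, 0, 0, 0, 0, 0, 0, 0, 0, 0, 0, 0, 0, 1, 0, 0]]

def Fd_Q10 : List (List ℤ) := [[10, 0, 0, 0, 0, 0, 0, 0],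
  [5, 0, 0, 0, 0, 0, 0, 0],
  [6, 1, 0, 0, 0, 0, 0, 0],
  [3, 0, 1, 0, 0, 0, 0, 0],
  [7, 0, 0, 1, 0, 0, 0, 0],
  [5, 0, 0, 0, 1, 0, 0, 0],
  [3, 0, 0, 0, 0, 0, 0, 0],
  [1, 0, 0, 0, 0, 0, 0, 0],
  [0, 0, 0, 0, 0, 2, 0, 0],
  [0, 0, 0, 0, 0, 1, 0, 0],
  [0, 0, 0, 0, 0, 1, 0, 0],
  [0, 0, 0, 0, 0, 0, 0, 0],
  [0, 0, 0, 0, 0, 1, 0, 0],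
  [0, 0, 0, 0, 0, 1, 0, 0],
  [0, 0, 0, 0, 0, 0, 1, 0],
  [0, 0, 0, 0, 0, 0, 0, 1],
  [1, 0, 0, 0, 0, 0, 0, 0],
  [2, 0, 0, 0, 0, 1, 0, 0]]

def Gd_Q10 : List (List ℤ) := [[0, 0, 0, 0, 0, 0, 0, 1, 0, 0, 0, 0, 0, 0, 0, 0, 0, 0],
  [0, 0, 1, 0, 0, 0, 0, -6, 0, 0, 0, 0, 0, 0, 0, 0, 0, 0],
  [0, 0, 0, 1, 0, 0, 0, -3, 0, 0, 0, 0, 0, 0, 0, 0, 0, 0],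
  [0, 0, 0, 0, 1, 0, 0, -7, 0, 0, 0, 0, 0, 0, 0, 0, 0, 0],
  [0, 0, 0, 0, 0, 1, 0, -5, 0, 0, 0, 0, 0, 0, 0, 0, 0, 0],
  [0, 0, 0, 0, 0, 0, 0, 0, 0, 1, 0, 0, 0, 0, 0, 0, 0, 0],
  [0, 0, 0, 0, 0, 0, 0, 0, 0, 0, 0, 0, 0, 0, 1, 0, 0, 0],
  [0, 0, 0, 0, 0, 0, 0, 0, 0, 0, 0, 0, 0, 0, 0, 1, 0, 0]]

def Fd_Q11 : List (List ℤ) := [[10, 0, 0, 0, 0, 0, 0, 0, 0],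
  [5, 0, 0, 0, 0, 0, 0, 0, 0],
  [6, 1, 0, 0, 0, 0, 0, 0, 0],
  [3, 0, 1, 0, 0, 0, 0, 0, 0],
  [7, 0, 0, 1, 0, 0, 0, 0, 0],
  [5, 0, 0, 0, 1, 0, 0, 0, 0],
  [3, 0, 0, 0, 0, 0, 0, 0, 0],
  [1, 0, 0, 0, 0, 0, 0, 0, 0],
  [0, 0, 0, 0, 0, 2, 0, 0, 0],
  [0, 0, 0, 0, 0, 1, 0, 0, 0],
  [0, 0, 0, 0, 0, 1, 0, 0, 0],
  [0, 0, 0, 0, 0, 0, 0, 0, 0],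
  [0, 0, 0, 0, 0, 1, 0, 0, 0],
  [0, 0, 0, 0, 0, 0, 1, 0, 0],
  [0, 0, 0, 0, 0, 0, 0, 1, 0],
  [0, 0, 0, 0, 0, 0, 0, 0, 1],
  [1, 0, 0, 0, 0, 0, 0, 0, 0],
  [2, 0, 0, 0, 0, 1, 0, 0, 0]]

def Gd_Q11 : List (List ℤ) := [[0, 0, 0, 0, 0, 0, 0, 1, 0, 0, 0, 0, 0, 0, 0, 0, 0, 0],
  [0, 0, 1, 0, 0, 0, 0, -6, 0, 0, 0, 0, 0, 0, 0, 0, 0, 0],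
  [0, 0, 0, 1, 0, 0, 0, -3, 0, 0, 0, 0, 0, 0, 0, 0, 0, 0],
  [0, 0, 0, 0, 1, 0, 0, -7, 0, 0, 0, 0, 0, 0, 0, 0, 0, 0],
  [0, 0, 0, 0, 0, 1, 0, -5, 0, 0, 0, 0, 0, 0, 0, 0, 0, 0],
  [0, 0, 0, 0, 0, 0, 0, 0, 0, 1, 0, 0, 0, 0, 0, 0, 0, 0],
  [0, 0, 0, 0, 0, 0, 0, 0, 0, 0, 0, 0, 0, 1, 0, 0, 0, 0],
  [0, 0, 0, 0, 0, 0, 0, 0, 0, 0, 0, 0, 0, 0, 1, 0, 0, 0],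
  [0, 0, 0, 0, 0, 0, 0, 0, 0, 0, 0, 0, 0, 0, 0, 1, 0, 0]]

def Fd_Q12 : List (List ℤ) := [[10, 0, 0, 0, 0, 0, 0, 0, 0, 0],
  [5, 0, 0, 0, 0, 0, 0, 0, 0, 0],
  [6, 1, 0, 0, 0, 0, 0, 0, 0, 0],
  [3, 0, 1, 0, 0, 0, 0, 0, 0, 0],
  [7, 0, 0, 1, 0, 0, 0, 0, 0, 0],
  [5, 0, 0, 0, 1, 0, 0, 0, 0, 0],
  [3, 0, 0, 0, 0, 0, 0, 0, 0, 0],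
  [1, 0, 0, 0, 0, 0, 0, 0, 0, 0],
  [0, 0, 0, 0, 0, 1, 0, 0, 0, 0],
  [0, 0, 0, 0, 0, 0, 0, 0, 0, 0],
  [0, 0, 0, 0, 0, 0, 0, 0, 0, 0],
  [0, 0, 0, 0, 0, 0, 0, 0, 0, 0],
  [0, 0, 0, 0, 0, 0, 1, 0, 0, 0],
  [0, 0, 0, 0, 0, 0, 0, 1, 0, 0],
  [0, 0, 0, 0, 0, 0, 0, 0, 1, 0],
  [0, 0, 0, 0, 0, 0, 0, 0, 0, 1],
  [1, 0, 0, 0, 0, 0, 0, 0, 0, 0],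
  [2, 0, 0, 0, 0, 1, 0, 0, 0, 0]]

def Gd_Q12 : List (List ℤ) := [[0, 0, 0, 0, 0, 0, 0, 1, 0, 0, 0, 0, 0, 0, 0, 0, 0, 0],
  [0, 0, 1, 0, 0, 0, 0, -6, 0, 0, 0, 0, 0, 0, 0, 0, 0, 0],
  [0, 0, 0, 1, 0, 0, 0, -3, 0, 0, 0, 0, 0, 0, 0, 0, 0, 0],
  [0, 0, 0, 0, 1, 0, 0, -7, 0, 0, 0, 0, 0, 0, 0, 0, 0, 0],
  [0, 0, 0, 0, 0, 1, 0, -5, 0, 0, 0, 0, 0, 0, 0, 0, 0, 0],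
  [0, 0, 0, 0, 0, 0, 0, 0, 1, 0, 0, 0, 0, 0, 0, 0, 0, 0],
  [0, 0, 0, 0, 0, 0, 0, 0, 0, 0, 0, 0, 1, 0, 0, 0, 0, 0],
  [0, 0, 0, 0, 0, 0, 0, 0, 0, 0, 0, 0, 0, 1, 0, 0, 0, 0],
  [0, 0, 0, 0, 0, 0, 0, 0, 0, 0, 0, 0, 0, 0, 1, 0, 0, 0],
  [0, 0, 0, 0, 0, 0, 0, 0, 0, 0, 0, 0, 0, 0, 0, 1, 0, 0]]

def Fd_W12 : List (List ℤ) := [[11, 0, 0, 0, 0, 0, 0, 0, 0, 0],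
  [5, 1, 0, 0, 0, 0, 0, 0, 0, 0],
  [7, 0, 0, 0, 0, 0, 0, 0, 0, 0],
  [3, 0, 0, 0, 0, 0, 0, 0, 0, 0],
  [8, 0, 1, 0, 0, 0, 0, 0, 0, 0],
  [6, 0, 0, 1, 0, 0, 0, 0, 0, 0],
  [4, 0, 0, 0, 1, 0, 0, 0, 0, 0],
  [2, 0, 0, 0, 0, 1, 0, 0, 0, 0],
  [0, 0, 0, 0, 0, 0, 2, 0, 0, 0],
  [0, 0, 0, 0, 0, 0, 1, 0, 0, 0],
  [0, 0, 0, 0, 0, 0, 1, 0, 0, 0],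
  [0, 0, 0, 0, 0, 0, 0, 0, 0, 0],
  [0, 0, 0, 0, 0, 0, 1, 0, 0, 0],
  [0, 0, 0, 0, 0, 0, 0, 1, 0, 0],
  [0, 0, 0, 0, 0, 0, 0, 0, 1, 0],
  [0, 0, 0, 0, 0, 0, 0, 0, 0, 1],
  [1, 0, 0, 0, 0, 0, 0, 0, 0, 0],
  [2, 0, 0, 0, 0, 0, 1, 0, 0, 0]]

def Gd_W12 : List (List ℤ) := [[0, 0, 0, 0, 0, 0, 0, 0, 0, 0, 0, 0, 0, 0, 0, 0, 1, 0],
  [0, 1, 0, 0, 0, 0, 0, 0, 0, 0, 0, 0, 0, 0, 0, 0, -5, 0],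
  [0, 0, 0, 0, 1, 0, 0, 0, 0, 0, 0, 0, 0, 0, 0, 0, -8, 0],
  [0, 0, 0, 0, 0, 1, 0, 0, 0, 0, 0, 0, 0, 0, 0, 0, -6, 0],
  [0, 0, 0, 0, 0, 0, 1, 0, 0, 0, 0, 0, 0, 0, 0, 0, -4, 0],
  [0, 0, 0, 0, 0, 0, 0, 1, 0, 0, 0, 0, 0, 0, 0, 0, -2, 0],
  [0, 0, 0, 0, 0, 0, 0, 0, 0, 1, 0, 0, 0, 0, 0, 0, 0, 0],
  [0, 0, 0, 0, 0, 0, 0, 0, 0, 0, 0, 0, 0, 1, 0, 0, 0, 0],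
  [0, 0, 0, 0, 0, 0, 0, 0, 0, 0, 0, 0, 0, 0, 1, 0, 0, 0],
  [0, 0, 0, 0, 0, 0, 0, 0, 0, 0, 0, 0, 0, 0, 0, 1, 0, 0]]

def Fd_W13 : List (List ℤ) := [[11, 0, 0, 0, 0, 0, 0, 0, 0, 0, 0],
  [5, 1, 0, 0, 0, 0, 0, 0, 0, 0, 0],
  [7, 0, 0, 0, 0, 0, 0, 0, 0, 0, 0],
  [3, 0, 0, 0, 0, 0, 0, 0, 0, 0, 0],
  [8, 0, 1, 0, 0, 0, 0, 0, 0, 0, 0],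
  [6, 0, 0, 1, 0, 0, 0, 0, 0, 0, 0],
  [4, 0, 0, 0, 1, 0, 0, 0, 0, 0, 0],
  [2, 0, 0, 0, 0, 1, 0, 0, 0, 0, 0],
  [0, 0, 0, 0, 0, 0, 1, 0, 0, 0, 0],
  [0, 0, 0, 0, 0, 0, 0, 0, 0, 0, 0],
  [0, 0, 0, 0, 0, 0, 0, 0, 0, 0, 0],
  [0, 0, 0, 0, 0, 0, 0, 0, 0, 0, 0],
  [0, 0, 0, 0, 0, 0, 0, 1, 0, 0, 0],
  [0, 0, 0, 0, 0, 0, 0, 0, 1, 0, 0],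
  [0, 0, 0, 0, 0, 0, 0, 0, 0, 1, 0],
  [0, 0, 0, 0, 0, 0, 0, 0, 0, 0, 1],
  [1, 0, 0, 0, 0, 0, 0, 0, 0, 0, 0],
  [2, 0, 0, 0, 0, 0, 1, 0, 0, 0, 0]]

def Gd_W13 : List (List ℤ) := [[0, 0, 0, 0, 0, 0, 0, 0, 0, 0, 0, 0, 0, 0, 0, 0, 1, 0],
  [0, 1, 0, 0, 0, 0, 0, 0, 0, 0, 0, 0, 0, 0, 0, 0, -5, 0],
  [0, 0, 0, 0, 1, 0, 0, 0, 0, 0, 0, 0, 0, 0, 0, 0, -8, 0],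
  [0, 0, 0, 0, 0, 1, 0, 0, 0, 0, 0, 0, 0, 0, 0, 0, -6, 0],
  [0, 0, 0, 0, 0, 0, 1, 0, 0, 0, 0, 0, 0, 0, 0, 0, -4, 0],
  [0, 0, 0, 0, 0, 0, 0, 1, 0, 0, 0, 0, 0, 0, 0, 0, -2, 0],
  [0, 0, 0, 0, 0, 0, 0, 0, 1, 0, 0, 0, 0, 0, 0, 0, 0, 0],
  [0, 0, 0, 0, 0, 0, 0, 0, 0, 0, 0, 0, 1, 0, 0, 0, 0, 0],
  [0, 0, 0, 0, 0, 0, 0, 0, 0, 0, 0, 0, 0, 1, 0, 0, 0, 0],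
  [0, 0, 0, 0, 0, 0, 0, 0, 0, 0, 0, 0, 0, 0, 1, 0, 0, 0],
  [0, 0, 0, 0, 0, 0, 0, 0, 0, 0, 0, 0, 0, 0, 0, 1, 0, 0]]

def Fd_S11 : List (List ℤ) := [[10, 0, 0, 0, 0, 0, 0, 0, 0],
  [5, 0, 0, 0, 0, 0, 0, 0, 0],
  [6, 1, 0, 0, 0, 0, 0, 0, 0],
  [3, 0, 1, 0, 0, 0, 0, 0, 0],
  [7, 0, 0, 1, 0, 0, 0, 0, 0],
  [5, 0, 0, 0, 1, 0, 0, 0, 0],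
  [3, 0, 0, 0, 0, 1, 0, 0, 0],
  [1, 0, 0, 0, 0, 0, 0, 0, 0],
  [0, 0, 0, 0, 0, 0, 2, 0, 0],
  [0, 0, 0, 0, 0, 0, 1, 0, 0],
  [0, 0, 0, 0, 0, 0, 1, 0, 0],
  [0, 0, 0, 0, 0, 0, 0, 0, 0],
  [0, 0, 0, 0, 0, 0, 1, 0, 0],
  [0, 0, 0, 0, 0, 0, 1, 0, 0],
  [0, 0, 0, 0, 0, 0, 0, 1, 0],
  [0, 0, 0, 0, 0, 0, 0, 0, 1],
  [1, 0, 0, 0, 0, 0, 0, 0, 0],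
  [2, 0, 0, 0, 0, 0, 1, 0, 0]]

def Gd_S11 : List (List ℤ) := [[0, 0, 0, 0, 0, 0, 0, 1, 0, 0, 0, 0, 0, 0, 0, 0, 0, 0],
  [0, 0, 1, 0, 0, 0, 0, -6, 0, 0, 0, 0, 0, 0, 0, 0, 0, 0],
  [0, 0, 0, 1, 0, 0, 0, -3, 0, 0, 0, 0, 0, 0, 0, 0, 0, 0],
  [0, 0, 0, 0, 1, 0, 0, -7, 0, 0, 0, 0, 0, 0, 0, 0, 0, 0],
  [0, 0, 0, 0, 0, 1, 0, -5, 0, 0, 0, 0, 0, 0, 0, 0, 0, 0],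
  [0, 0, 0, 0, 0, 0, 1, -3, 0, 0, 0, 0, 0, 0, 0, 0, 0, 0],
  [0, 0, 0, 0, 0, 0, 0, 0, 0, 1, 0, 0, 0, 0, 0, 0, 0, 0],
  [0, 0, 0, 0, 0, 0, 0, 0, 0, 0, 0, 0, 0, 0, 1, 0, 0, 0],
  [0, 0, 0, 0, 0, 0, 0, 0, 0, 0, 0, 0, 0, 0, 0, 1, 0, 0]]

def Fd_S12 : List (List ℤ) := [[10, 0, 0, 0, 0, 0, 0, 0, 0, 0],
  [5, 0, 0, 0, 0, 0, 0, 0, 0, 0],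
  [6, 1, 0, 0, 0, 0, 0, 0, 0, 0],
  [3, 0, 1, 0, 0, 0, 0, 0, 0, 0],
  [7, 0, 0, 1, 0, 0, 0, 0, 0, 0],
  [5, 0, 0, 0, 1, 0, 0, 0, 0, 0],
  [3, 0, 0, 0, 0, 1, 0, 0, 0, 0],
  [1, 0, 0, 0, 0, 0, 0, 0, 0, 0],
  [0, 0, 0, 0, 0, 0, 2, 0, 0, 0],
  [0, 0, 0, 0, 0, 0, 1, 0, 0, 0],
  [0, 0, 0, 0, 0, 0, 1, 0, 0, 0],
  [0, 0, 0, 0, 0, 0, 0, 0, 0, 0],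
  [0, 0, 0, 0, 0, 0, 1, 0, 0, 0],
  [0, 0, 0, 0, 0, 0, 0, 1, 0, 0],
  [0, 0, 0, 0, 0, 0, 0, 0, 1, 0],
  [0, 0, 0, 0, 0, 0, 0, 0, 0, 1],
  [1, 0, 0, 0, 0, 0, 0, 0, 0, 0],
  [2, 0, 0, 0, 0, 0, 1, 0, 0, 0]]

def Gd_S12 : List (List ℤ) := [[0, 0, 0, 0, 0, 0, 0, 1, 0, 0, 0, 0, 0, 0, 0, 0, 0, 0],
  [0, 0, 1, 0, 0, 0, 0, -6, 0, 0, 0, 0, 0, 0, 0, 0, 0, 0],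
  [0, 0, 0, 1, 0, 0, 0, -3, 0, 0, 0, 0, 0, 0, 0, 0, 0, 0],
  [0, 0, 0, 0, 1, 0, 0, -7, 0, 0, 0, 0, 0, 0, 0, 0, 0, 0],
  [0, 0, 0, 0, 0, 1, 0, -5, 0, 0, 0, 0, 0, 0, 0, 0, 0, 0],
  [0, 0, 0, 0, 0, 0, 1, -3, 0, 0, 0, 0, 0, 0, 0, 0, 0, 0],
  [0, 0, 0, 0, 0, 0, 0, 0, 0, 1, 0, 0, 0, 0, 0, 0, 0, 0],
  [0, 0, 0, 0, 0, 0, 0, 0, 0, 0, 0, 0, 0, 1, 0, 0, 0, 0],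
  [0, 0, 0, 0, 0, 0, 0, 0, 0, 0, 0, 0, 0, 0, 1, 0, 0, 0],
  [0, 0, 0, 0, 0, 0, 0, 0, 0, 0, 0, 0, 0, 0, 0, 1, 0, 0]]

def Fd_U12 : List (List ℤ) := [[10, 0, 0, 0, 0, 0, 0, 0, 0, 0],
  [6, 0, 0, 0, 0, 0, 0, 0, 0, 0],
  [5, 0, 0, 0, 0, 0, 0, 0, 0, 0],
  [2, 0, 0, 0, 0, 0, 0, 0, 0, 0],
  [7, 1, 0, 0, 0, 0, 0, 0, 0, 0],
  [5, 0, 1, 0, 0, 0, 0, 0, 0, 0],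
  [3, 0, 0, 1, 0, 0, 0, 0, 0, 0],
  [1, 0, 0, 0, 0, 0, 0, 0, 0, 0],
  [6, 0, 0, 0, 0, 0, 0, 4, 0, 0],
  [3, 0, 0, 0, 0, 0, 0, 2, 0, 0],
  [4, 0, 0, 0, 0, 0, 0, 2, 1, 0],
  [2, 0, 0, 0, 0, 0, 0, 1, 0, 1],
  [4, 0, 0, 0, 1, 0, 0, 3, 0, 0],
  [3, 0, 0, 0, 0, 1, 0, 2, 0, 0],
  [2, 0, 0, 0, 0, 0, 1, 1, 0, 0],
  [1, 0, 0, 0, 0, 0, 0, 0, 0, 0],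
  [2, 0, 0, 0, 0, 0, 0, 0, 0, 0],
  [3, 0, 0, 0, 0, 0, 0, 1, 0, 0]]

def Gd_U12 : List (List ℤ) := [[0, 0, 0, 0, 0, 0, 0, 1, 0, 0, 0, 0, 0, 0, 0, 0, 0, 0],
  [0, 0, 0, 0, 1, 0, 0, -7, 0, 0, 0, 0, 0, 0, 0, 0, 0, 0],
  [0, 0, 0, 0, 0, 1, 0, -5, 0, 0, 0, 0, 0, 0, 0, 0, 0, 0],
  [0, 0, 0, 0, 0, 0, 1, -3, 0, 0, 0, 0, 0, 0, 0, 0, 0, 0],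
  [0, 0, 0, 0, 0, 0, 0, 5, 0, 0, 0, 0, 1, 0, 0, 0, 0, -3],
  [0, 0, 0, 0, 0, 0, 0, 3, 0, 0, 0, 0, 0, 1, 0, 0, 0, -2],
  [0, 0, 0, 0, 0, 0, 0, 1, 0, 0, 0, 0, 0, 0, 1, 0, 0, -1],
  [0, 0, 0, 0, 0, 0, 0, -3, 0, 0, 0, 0, 0, 0, 0, 0, 0, 1],
  [0, 0, 0, 0, 0, 0, 0, 2, 0, 0, 1, 0, 0, 0, 0, 0, 0, -2],
  [0, 0, 0, 0, 0, 0, 0, 1, 0, 0, 0, 1, 0, 0, 0, 0, 0, -1]]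

set_option maxRecDepth 100000
set_option maxHeartbeats 2000000

/-- for every triangle singularity type `T` and every `N ≥ 1` there is a
primitive embedding of `P(T)` into `Λ_N`. -/
theorem statement_1 (T : TriType) (N : ℕ) (hN : 1 ≤ N) :
    ∃ f : (Fin (Prank T) → ℤ) →ₗ[ℤ] (LambdaIx N → ℤ),
      IsEmbedding (PGram T) (LambdaGram N) f ∧ IsPrimitive (LinearMap.range f) := by
  cases T with
  | E12 =>
    rw [show PGram TriType.E12 = starGramC 2 3 7 from starGram_eq 2 3 7]
    exact master (starGramC 2 3 7) (mkF Fd_E12 10) (mkG Gd_E12 10)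
      (Matrix.ext (@of_decide_eq_true _ (@Nat.decidableForallFin _ _ (fun _ => @Nat.decidableForallFin _ _ (fun _ => Int.instDecidableEq _ _))) rfl))
        (Matrix.ext (@of_decide_eq_true _ (@Nat.decidableForallFin _ _ (fun _ => @Nat.decidableForallFin _ _ (fun _ => Int.instDecidableEq _ _))) rfl)) N hN
  | E13 =>
    rw [show PGram TriType.E13 = starGramC 2 4 5 from starGram_eq 2 4 5]
    exact master (starGramC 2 4 5) (mkF Fd_Z11 9) (mkG Gd_Z11 9)
      (Matrix.ext (@of_decide_eq_true _ (@Nat.decidableForallFin _ _ (fun _ => @Nat.decidableForallFin _ _ (fun _ => Int.instDecidableEq _ _))) rfl))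
        (Matrix.ext (@of_decide_eq_true _ (@Nat.decidableForallFin _ _ (fun _ => @Nat.decidableForallFin _ _ (fun _ => Int.instDecidableEq _ _))) rfl)) N hN
  | E14 =>
    rw [show PGram TriType.E14 = starGramC 3 3 4 from starGram_eq 3 3 4]
    exact master (starGramC 3 3 4) (mkF Fd_Q10 8) (mkG Gd_Q10 8)
      (Matrix.ext (@of_decide_eq_true _ (@Nat.decidableForallFin _ _ (fun _ => @Nat.decidableForallFin _ _ (fun _ => Int.instDecidableEq _ _))) rfl))
        (Matrix.ext (@of_decide_eq_true _ (@Nat.decidableForallFin _ _ (fun _ => @Nat.decidableForallFin _ _ (fun _ => Int.instDecidableEq _ _))) rfl)) N hN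
  | Z11 =>
    rw [show PGram TriType.Z11 = starGramC 2 3 8 from starGram_eq 2 3 8]
    exact master (starGramC 2 3 8) (mkF Fd_E13 11) (mkG Gd_E13 11)
      (Matrix.ext (@of_decide_eq_true _ (@Nat.decidableForallFin _ _ (fun _ => @Nat.decidableForallFin _ _ (fun _ => Int.instDecidableEq _ _))) rfl))
        (Matrix.ext (@of_decide_eq_true _ (@Nat.decidableForallFin _ _ (fun _ => @Nat.decidableForallFin _ _ (fun _ => Int.instDecidableEq _ _))) rfl)) N hN
  | Z12 =>
    rw [show PGram TriType.Z12 = starGramC 2 4 6 from starGram_eq 2 4 6]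
    exact master (starGramC 2 4 6) (mkF Fd_Z12 10) (mkG Gd_Z12 10)
      (Matrix.ext (@of_decide_eq_true _ (@Nat.decidableForallFin _ _ (fun _ => @Nat.decidableForallFin _ _ (fun _ => Int.instDecidableEq _ _))) rfl))
        (Matrix.ext (@of_decide_eq_true _ (@Nat.decidableForallFin _ _ (fun _ => @Nat.decidableForallFin _ _ (fun _ => Int.instDecidableEq _ _))) rfl)) N hN
  | Z13 =>
    rw [show PGram TriType.Z13 = starGramC 3 3 5 from starGram_eq 3 3 5]
    exact master (starGramC 3 3 5) (mkF Fd_Q11 9) (mkG Gd_Q11 9)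
      (Matrix.ext (@of_decide_eq_true _ (@Nat.decidableForallFin _ _ (fun _ => @Nat.decidableForallFin _ _ (fun _ => Int.instDecidableEq _ _))) rfl))
        (Matrix.ext (@of_decide_eq_true _ (@Nat.decidableForallFin _ _ (fun _ => @Nat.decidableForallFin _ _ (fun _ => Int.instDecidableEq _ _))) rfl)) N hN
  | Q10 =>
    rw [show PGram TriType.Q10 = starGramC 2 3 9 from starGram_eq 2 3 9]
    exact master (starGramC 2 3 9) (mkF Fd_E14 12) (mkG Gd_E14 12)
      (Matrix.ext (@of_decide_eq_true _ (@Nat.decidableForallFin _ _ (fun _ => @Nat.decidableForallFin _ _ (fun _ => Int.instDecidableEq _ _))) rfl))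
        (Matrix.ext (@of_decide_eq_true _ (@Nat.decidableForallFin _ _ (fun _ => @Nat.decidableForallFin _ _ (fun _ => Int.instDecidableEq _ _))) rfl)) N hN
  | Q11 =>
    rw [show PGram TriType.Q11 = starGramC 2 4 7 from starGram_eq 2 4 7]
    exact master (starGramC 2 4 7) (mkF Fd_Z13 11) (mkG Gd_Z13 11)
      (Matrix.ext (@of_decide_eq_true _ (@Nat.decidableForallFin _ _ (fun _ => @Nat.decidableForallFin _ _ (fun _ => Int.instDecidableEq _ _))) rfl))
        (Matrix.ext (@of_decide_eq_true _ (@Nat.decidableForallFin _ _ (fun _ => @Nat.decidableForallFin _ _ (fun _ => Int.instDecidableEq _ _))) rfl)) N hN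
  | Q12 =>
    rw [show PGram TriType.Q12 = starGramC 3 3 6 from starGram_eq 3 3 6]
    exact master (starGramC 3 3 6) (mkF Fd_Q12 10) (mkG Gd_Q12 10)
      (Matrix.ext (@of_decide_eq_true _ (@Nat.decidableForallFin _ _ (fun _ => @Nat.decidableForallFin _ _ (fun _ => Int.instDecidableEq _ _))) rfl))
        (Matrix.ext (@of_decide_eq_true _ (@Nat.decidableForallFin _ _ (fun _ => @Nat.decidableForallFin _ _ (fun _ => Int.instDecidableEq _ _))) rfl)) N hN
  | W12 =>
    rw [show PGram TriType.W12 = starGramC 2 5 5 from starGram_eq 2 5 5]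
    exact master (starGramC 2 5 5) (mkF Fd_W12 10) (mkG Gd_W12 10)
      (Matrix.ext (@of_decide_eq_true _ (@Nat.decidableForallFin _ _ (fun _ => @Nat.decidableForallFin _ _ (fun _ => Int.instDecidableEq _ _))) rfl))
        (Matrix.ext (@of_decide_eq_true _ (@Nat.decidableForallFin _ _ (fun _ => @Nat.decidableForallFin _ _ (fun _ => Int.instDecidableEq _ _))) rfl)) N hN
  | W13 =>
    rw [show PGram TriType.W13 = starGramC 3 4 4 from starGram_eq 3 4 4]
    exact master (starGramC 3 4 4) (mkF Fd_S11 9) (mkG Gd_S11 9)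
      (Matrix.ext (@of_decide_eq_true _ (@Nat.decidableForallFin _ _ (fun _ => @Nat.decidableForallFin _ _ (fun _ => Int.instDecidableEq _ _))) rfl))
        (Matrix.ext (@of_decide_eq_true _ (@Nat.decidableForallFin _ _ (fun _ => @Nat.decidableForallFin _ _ (fun _ => Int.instDecidableEq _ _))) rfl)) N hN
  | S11 =>
    rw [show PGram TriType.S11 = starGramC 2 5 6 from starGram_eq 2 5 6]
    exact master (starGramC 2 5 6) (mkF Fd_W13 11) (mkG Gd_W13 11)
      (Matrix.ext (@of_decide_eq_true _ (@Nat.decidableForallFin _ _ (fun _ => @Nat.decidableForallFin _ _ (fun _ => Int.instDecidableEq _ _))) rfl))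
        (Matrix.ext (@of_decide_eq_true _ (@Nat.decidableForallFin _ _ (fun _ => @Nat.decidableForallFin _ _ (fun _ => Int.instDecidableEq _ _))) rfl)) N hN
  | S12 =>
    rw [show PGram TriType.S12 = starGramC 3 4 5 from starGram_eq 3 4 5]
    exact master (starGramC 3 4 5) (mkF Fd_S12 10) (mkG Gd_S12 10)
      (Matrix.ext (@of_decide_eq_true _ (@Nat.decidableForallFin _ _ (fun _ => @Nat.decidableForallFin _ _ (fun _ => Int.instDecidableEq _ _))) rfl))
        (Matrix.ext (@of_decide_eq_true _ (@Nat.decidableForallFin _ _ (fun _ => @Nat.decidableForallFin _ _ (fun _ => Int.instDecidableEq _ _))) rfl)) N hN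
  | U12 =>
    rw [show PGram TriType.U12 = starGramC 4 4 4 from starGram_eq 4 4 4]
    exact master (starGramC 4 4 4) (mkF Fd_U12 10) (mkG Gd_U12 10)
      (Matrix.ext (@of_decide_eq_true _ (@Nat.decidableForallFin _ _ (fun _ => @Nat.decidableForallFin _ _ (fun _ => Int.instDecidableEq _ _))) rfl))
        (Matrix.ext (@of_decide_eq_true _ (@Nat.decidableForallFin _ _ (fun _ => @Nat.decidableForallFin _ _ (fun _ => Int.instDecidableEq _ _))) rfl)) N hN

end Urabe
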